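/- arXiv:1711.10466 — 9 statements merged into one kernel-verified Lean document; each statement's English description precedes it below -/
import Mathlib

section
/- For the ruled surface parametrized by x = t·cos φ + p·sin((n−1)φ) − h·sin φ, y = t·sin φ + p·cos((n−1)φ) + h·cos φ, z = h·sin(nφ) − (t/n)·cos(nφ) − q·t·h, with n ≥ 2, if (n−1)p(1−q|t|) + qt² > 0 then the cross product of the partial derivatives with respect to h and φ never vanishes (i.e., the parametrization is an immersion of ℝ × S¹). -/
private lemma hasDerivAt_sin_mul (a x : ℝ) :
    HasDerivAt (fun y : ℝ => Real.sin (a * y)) (a * Real.cos (a * x)) x := by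
  simpa [mul_comm, Function.comp_def] using (Real.hasDerivAt_sin (a * x)).comp x ((hasDerivAt_id x).const_mul a)

private lemma hasDerivAt_cos_mul (a x : ℝ) :
    HasDerivAt (fun y : ℝ => Real.cos (a * y)) (-(a * Real.sin (a * x))) x := by
  have := (Real.hasDerivAt_cos (a * x)).comp x ((hasDerivAt_id x).const_mul a)
  simpa [mul_comm, Function.comp_def] using this

set_option maxHeartbeats 1000000 in
/-- The ruled surface of the eversion family is an immersion:
under the smoothness condition `(n-1)·p·(1-q|t|) + q·t² > 0`, the cross product
of the partial derivatives with respect to `h` and `φ` never vanishes. -/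
theorem stmt_0 (n : ℕ) (hn : 2 ≤ n) (p q t : ℝ) (hp : 0 < p) (hq : 0 ≤ q)
    (hcond : ((n : ℝ) - 1) * p * (1 - q * |t|) + q * t ^ 2 > 0)
    (h φ : ℝ) :
    let x : ℝ → ℝ → ℝ := fun h φ =>
      t * Real.cos φ + p * Real.sin (((n : ℝ) - 1) * φ) - h * Real.sin φ
    let y : ℝ → ℝ → ℝ := fun h φ =>
      t * Real.sin φ + p * Real.cos (((n : ℝ) - 1) * φ) + h * Real.cos φ
    let z : ℝ → ℝ → ℝ := fun h φ =>
      h * Real.sin ((n : ℝ) * φ) - (t / (n : ℝ)) * Real.cos ((n : ℝ) * φ) - q * t * h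
    let xh := deriv (fun h' => x h' φ) h
    let yh := deriv (fun h' => y h' φ) h
    let zh := deriv (fun h' => z h' φ) h
    let xφ := deriv (fun φ' => x h φ') φ
    let yφ := deriv (fun φ' => y h φ') φ
    let zφ := deriv (fun φ' => z h φ') φ
    ¬ (yh * zφ - zh * yφ = 0 ∧ zh * xφ - xh * zφ = 0 ∧ xh * yφ - yh * xφ = 0) := by
  intro x y z xh yh zh xφ yφ zφ
  rintro ⟨hA, hB, hC⟩
  have hn2 : (2 : ℝ) ≤ (n : ℝ) := by exact_mod_cast hn
  have hn0 : (n : ℝ) ≠ 0 := by linarith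
  -- derivative values
  have exh : xh = -Real.sin φ := by
    show deriv (fun h' : ℝ =>
        t * Real.cos φ + p * Real.sin (((n : ℝ) - 1) * φ) - h' * Real.sin φ) h
      = -Real.sin φ
    have H : HasDerivAt (fun h' : ℝ =>
        t * Real.cos φ + p * Real.sin (((n : ℝ) - 1) * φ) - h' * Real.sin φ)
        (-(1 * Real.sin φ)) h :=
      HasDerivAt.const_sub _ ((hasDerivAt_id h).mul_const (Real.sin φ))
    rw [H.deriv]; ring
  have eyh : yh = Real.cos φ := by
    show deriv (fun h' : ℝ =>
        t * Real.sin φ + p * Real.cos (((n : ℝ) - 1) * φ) + h' * Real.cos φ) h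
      = Real.cos φ
    have H : HasDerivAt (fun h' : ℝ =>
        t * Real.sin φ + p * Real.cos (((n : ℝ) - 1) * φ) + h' * Real.cos φ)
        (1 * Real.cos φ) h :=
      HasDerivAt.const_add _ ((hasDerivAt_id h).mul_const (Real.cos φ))
    rw [H.deriv]; ring
  have ezh : zh = Real.sin ((n : ℝ) * φ) - q * t := by
    show deriv (fun h' : ℝ =>
        h' * Real.sin ((n : ℝ) * φ) - t / (n : ℝ) * Real.cos ((n : ℝ) * φ) - q * t * h') h
      = Real.sin ((n : ℝ) * φ) - q * t
    have H : HasDerivAt (fun h' : ℝ =>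
        h' * Real.sin ((n : ℝ) * φ) - t / (n : ℝ) * Real.cos ((n : ℝ) * φ) - q * t * h')
        (1 * Real.sin ((n : ℝ) * φ) - q * t * 1) h :=
      (((hasDerivAt_id h).mul_const (Real.sin ((n : ℝ) * φ))).sub_const _).sub
        ((hasDerivAt_id h).const_mul (q * t))
    rw [H.deriv]; ring
  have exφ : xφ = t * -Real.sin φ + p * (((n : ℝ) - 1) * Real.cos (((n : ℝ) - 1) * φ))
      - h * Real.cos φ := by
    show deriv (fun φ' : ℝ =>
        t * Real.cos φ' + p * Real.sin (((n : ℝ) - 1) * φ') - h * Real.sin φ') φ = _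
    have H : HasDerivAt (fun φ' : ℝ =>
        t * Real.cos φ' + p * Real.sin (((n : ℝ) - 1) * φ') - h * Real.sin φ')
        (t * -Real.sin φ + p * (((n : ℝ) - 1) * Real.cos (((n : ℝ) - 1) * φ))
          - h * Real.cos φ) φ :=
      (((Real.hasDerivAt_cos φ).const_mul t).add
        ((hasDerivAt_sin_mul ((n : ℝ) - 1) φ).const_mul p)).sub
        ((Real.hasDerivAt_sin φ).const_mul h)
    exact H.deriv
  have eyφ : yφ = t * Real.cos φ + p * -(((n : ℝ) - 1) * Real.sin (((n : ℝ) - 1) * φ))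
      + h * -Real.sin φ := by
    show deriv (fun φ' : ℝ =>
        t * Real.sin φ' + p * Real.cos (((n : ℝ) - 1) * φ') + h * Real.cos φ') φ = _
    have H : HasDerivAt (fun φ' : ℝ =>
        t * Real.sin φ' + p * Real.cos (((n : ℝ) - 1) * φ') + h * Real.cos φ')
        (t * Real.cos φ + p * -(((n : ℝ) - 1) * Real.sin (((n : ℝ) - 1) * φ))
          + h * -Real.sin φ) φ :=
      (((Real.hasDerivAt_sin φ).const_mul t).add
        ((hasDerivAt_cos_mul ((n : ℝ) - 1) φ).const_mul p)).add
        ((Real.hasDerivAt_cos φ).const_mul h)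
    exact H.deriv
  have ezφ : zφ = h * ((n : ℝ) * Real.cos ((n : ℝ) * φ)) + t * Real.sin ((n : ℝ) * φ) := by
    show deriv (fun φ' : ℝ =>
        h * Real.sin ((n : ℝ) * φ') - t / (n : ℝ) * Real.cos ((n : ℝ) * φ') - q * t * h) φ = _
    have H : HasDerivAt (fun φ' : ℝ =>
        h * Real.sin ((n : ℝ) * φ') - t / (n : ℝ) * Real.cos ((n : ℝ) * φ') - q * t * h)
        (h * ((n : ℝ) * Real.cos ((n : ℝ) * φ))
          - t / (n : ℝ) * -((n : ℝ) * Real.sin ((n : ℝ) * φ))) φ :=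
      (((hasDerivAt_sin_mul ((n : ℝ)) φ).const_mul h).sub
        ((hasDerivAt_cos_mul ((n : ℝ)) φ).const_mul (t / (n : ℝ)))).sub_const _
    rw [H.deriv]
    field_simp
    ring
  simp only [exh, eyh, ezh, exφ, eyφ, ezφ] at hA hB hC
  -- abbreviations
  set nn : ℝ := (n : ℝ) with hnn
  set s := Real.sin φ with hs
  set c := Real.cos φ with hc
  set S := Real.sin (nn * φ) with hS
  set K := Real.cos (nn * φ) with hK
  set S1 := Real.sin ((nn - 1) * φ) with hS1
  set C1 := Real.cos ((nn - 1) * φ) with hC1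
  have pyth : s ^ 2 + c ^ 2 = 1 := Real.sin_sq_add_cos_sq φ
  have pyth2 : S ^ 2 + K ^ 2 = 1 := Real.sin_sq_add_cos_sq (nn * φ)
  have hadd : nn * φ = (nn - 1) * φ + φ := by ring
  have hsin : S = S1 * c + C1 * s := by rw [hS, hadd, Real.sin_add]
  have hcos : K = C1 * c - S1 * s := by rw [hK, hadd, Real.cos_add]
  clear_value x y z xh yh zh xφ yφ zφ nn s c S K S1 C1
  clear exh eyh ezh exφ eyφ ezφ x y z xh yh zh xφ yφ zφ
  -- third component gives h = p(n-1)K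
  have e3 : h = p * (nn - 1) * K := by
    linear_combination hC - h * pyth - p * (nn - 1) * hcos
  -- c·A + s·B gives the key equation
  have e4 : h * (nn * K) + p * (nn - 1) * S ^ 2 + q * t ^ 2
      - q * t * (p * (nn - 1)) * S = 0 := by
    linear_combination c * hA + s * hB - (h * (nn * K) + q * t ^ 2) * pyth
      + (S - q * t) * p * (nn - 1) * hsin
  -- bound on the sine term
  have hSb : |S| ≤ 1 := by
    rw [hS]; exact abs_le.mpr ⟨Real.neg_one_le_sin _, Real.sin_le_one _⟩
  have htS : t * S ≤ |t| := by
    calc t * S ≤ |t * S| := le_abs_self _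
    _ = |t| * |S| := abs_mul t S
    _ ≤ |t| * 1 := by nlinarith [abs_nonneg t]
    _ = |t| := mul_one _
  have hP : 0 < p * (nn - 1) := by nlinarith
  have hfinal : q * t * (p * (nn - 1)) * S ≤ q * |t| * (p * (nn - 1)) := by
    nlinarith [mul_le_mul_of_nonneg_left htS (mul_nonneg hq hP.le)]
  rw [e3] at e4
  nlinarith [e4, pyth2, hfinal, hcond,
    mul_nonneg (mul_nonneg hP.le (by linarith : (0:ℝ) ≤ nn - 1)) (sq_nonneg K)]
end

section
/- For the halfway surface (n = 2, t = 0, p = 1, q = 0), for all (h, φ), the point (x,y,z) = (sin φ − h sin φ, cos φ + h cos φ, h sin 2φ), i.e. x = sin((n−1)φ) − h sin φ = sin φ(1−h), y = cos φ(1+h), z = h sin 2φ, satisfies the sextic equation 4xyz(x² − y²) + 4x²y²(x² + y² − 1) = 4z⁴ + z²(x² + y²)(x² + y² − 4). -/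
/-- The halfway surface (n = 2) lies on a sextic algebraic surface. -/
theorem stmt_1 (h φ : ℝ) :
    let x := Real.sin φ - h * Real.sin φ
    let y := Real.cos φ + h * Real.cos φ
    let z := h * Real.sin (2 * φ)
    4 * x * y * z * (x ^ 2 - y ^ 2) + 4 * x ^ 2 * y ^ 2 * (x ^ 2 + y ^ 2 - 1)
      = 4 * z ^ 4 + z ^ 2 * (x ^ 2 + y ^ 2) * (x ^ 2 + y ^ 2 - 4) := by
  intro x y z
  have hp : Real.sin φ ^ 2 + Real.cos φ ^ 2 = 1 := Real.sin_sq_add_cos_sq φ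
  simp only [x, y, z, Real.sin_two_mul]
  set s := Real.sin φ
  set c := Real.cos φ
  linear_combination (4 * s^2 * c^2 - 8 * s^2 * c^2 * h^2 + 4 * s^2 * c^2 * h^4
    - 4 * s^2 * c^4 * h^2 - 16 * s^2 * c^4 * h^3 - 24 * s^2 * c^4 * h^4
    - 16 * s^2 * c^4 * h^5 - 4 * s^2 * c^4 * h^6 - 4 * s^4 * c^2 * h^2
    + 16 * s^4 * c^2 * h^3 - 24 * s^4 * c^2 * h^4 + 16 * s^4 * c^2 * h^5
    - 4 * s^4 * c^2 * h^6) * hp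
end

section
/- Every point of the Boy surface parametrized by x = sin 2φ − h sin φ, y = cos 2φ + h cos φ, z = h sin 3φ (for (h,φ) ∈ ℝ × ℝ) satisfies the quintic equation 4z³ + z(x² + y²)(x² + y² − 3) + 2z(3x²y − y³) + (1 − x² − y²)(x³ − 3xy²) = 0. -/
/-- The Boy surface (n = 3 halfway model) lies on a quintic algebraic surface. -/
theorem stmt_2 (h φ : ℝ) :
    let x := Real.sin (2 * φ) - h * Real.sin φ
    let y := Real.cos (2 * φ) + h * Real.cos φ
    let z := h * Real.sin (3 * φ)
    4 * z ^ 3 + z * (x ^ 2 + y ^ 2) * (x ^ 2 + y ^ 2 - 3)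
      + 2 * z * (3 * x ^ 2 * y - y ^ 3)
      + (1 - x ^ 2 - y ^ 2) * (x ^ 3 - 3 * x * y ^ 2) = 0 := by
  intro x y z
  have hs : Real.sin φ ^ 2 + Real.cos φ ^ 2 = 1 := Real.sin_sq_add_cos_sq φ
  simp only [x, y, z, Real.sin_two_mul, Real.cos_two_mul, Real.sin_three_mul]
  set s := Real.sin φ
  set c := Real.cos φ
  linear_combination ( 6*s*c*h^2 + 24*s*c^2*h - 12*s*c^2*h^3 + 24*s*c^3 - 72*s*c^3*h^2 + 6*s*c^3*h^4 - 144*s*c^4*h + 48*s*c^4*h^3 - 96*s*c^5 + 144*s*c^5*h^2 + 192*s*c^6*h + 96*s*c^7 - 84*s^3*h^3 - 112*s^3*c*h^2 - 10*s^3*c*h^4 + 112*s^3*c^2*h - 32*s^3*c^2*h^3 - 4*s^3*c^2*h^5 - 16*s^3*c^3*h^2 - 32*s^3*c^3*h^4 - 96*s^3*c^4*h^3 - 32*s^3*c^5 - 128*s^3*c^5*h^2 - 64*s^3*c^6*h + 320*s^5*h^3 - 4*s^5*h^5 + 32*s^5*c*h^4 + 160*s^5*c^2*h^3 + 128*s^5*c^3*h^2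 - 64*s^5*c^4*h - 256*s^7*h^3) * hs
end

section
/- The halfway surface parametrized by x = sin φ − h sin φ, y = cos φ + h cos φ, z = h sin 2φ passes through the origin (0,0,0) exactly at the parameter values (h,φ) ∈ {(1, π/2), (1, −π/2), (−1, 0), (−1, π)} (with φ taken modulo 2π), i.e. the origin is a quadruple point of the surface. -/
open Real

lemma cos_zero_split (φ : ℝ) : Real.cos φ = 0 ↔
    (∃ k : ℤ, φ = Real.pi / 2 + k * (2 * Real.pi)) ∨
    (∃ k : ℤ, φ = -(Real.pi / 2) + k * (2 * Real.pi)) := by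
  rw [Real.cos_eq_zero_iff]
  constructor
  · rintro ⟨n, hn⟩
    rcases Int.even_or_odd n with ⟨k, hk⟩ | ⟨k, hk⟩
    · exact Or.inl ⟨k, by subst hk hn; push_cast; ring⟩
    · exact Or.inr ⟨k + 1, by subst hk hn; push_cast; ring⟩
  · rintro (⟨k, hk⟩ | ⟨k, hk⟩)
    · exact ⟨2 * k, by subst hk; push_cast; ring⟩
    · exact ⟨2 * k - 1, by subst hk; push_cast; ring⟩

lemma sin_zero_split (φ : ℝ) : Real.sin φ = 0 ↔
    (∃ k : ℤ, φ = k * (2 * Real.pi)) ∨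
    (∃ k : ℤ, φ = Real.pi + k * (2 * Real.pi)) := by
  rw [Real.sin_eq_zero_iff]
  constructor
  · rintro ⟨n, hn⟩
    rcases Int.even_or_odd n with ⟨k, hk⟩ | ⟨k, hk⟩
    · exact Or.inl ⟨k, by subst hk; rw [← hn]; push_cast; ring⟩
    · exact Or.inr ⟨k, by subst hk; rw [← hn]; push_cast; ring⟩
  · rintro (⟨k, hk⟩ | ⟨k, hk⟩)
    · exact ⟨2 * k, by subst hk; push_cast; ring⟩
    · exact ⟨2 * k + 1, by subst hk; push_cast; ring⟩

/-- The origin is a quadruple point of the halfway surface: the parametrization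
hits (0,0,0) exactly at (h,φ) ∈ {(1, π/2), (1, −π/2), (−1, 0), (−1, π)} modulo 2π. -/
theorem stmt_3 (h φ : ℝ) :
    (Real.sin φ - h * Real.sin φ = 0 ∧
     Real.cos φ + h * Real.cos φ = 0 ∧
     h * Real.sin (2 * φ) = 0) ↔
    ((h = 1 ∧ ∃ k : ℤ, φ = Real.pi / 2 + k * (2 * Real.pi)) ∨
     (h = 1 ∧ ∃ k : ℤ, φ = -(Real.pi / 2) + k * (2 * Real.pi)) ∨
     (h = -1 ∧ ∃ k : ℤ, φ = k * (2 * Real.pi)) ∨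
     (h = -1 ∧ ∃ k : ℤ, φ = Real.pi + k * (2 * Real.pi))) := by
  constructor
  · rintro ⟨e1, e2, e3⟩
    by_cases h1 : h = 1
    · subst h1
      have hc : Real.cos φ = 0 := by linarith
      rcases (cos_zero_split φ).1 hc with hk | hk
      · exact Or.inl ⟨rfl, hk⟩
      · exact Or.inr (Or.inl ⟨rfl, hk⟩)
    · have hs : Real.sin φ = 0 := by
        have : (1 - h) * Real.sin φ = 0 := by linarith
        rcases mul_eq_zero.1 this with h' | h'
        · exact absurd (by linarith : h = 1) h1
        · exact h'
      have hc : Real.cos φ ≠ 0 := by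
        intro hc
        have := Real.sin_sq_add_cos_sq φ
        rw [hs, hc] at this; norm_num at this
      have hm1 : h = -1 := by
        have : (1 + h) * Real.cos φ = 0 := by linarith
        rcases mul_eq_zero.1 this with h' | h'
        · linarith
        · exact absurd h' hc
      rcases (sin_zero_split φ).1 hs with hk | hk
      · exact Or.inr (Or.inr (Or.inl ⟨hm1, hk⟩))
      · exact Or.inr (Or.inr (Or.inr ⟨hm1, hk⟩))
  · rintro (⟨h1, k, hk⟩ | ⟨h1, k, hk⟩ | ⟨h1, k, hk⟩ | ⟨h1, k, hk⟩) <;> subst h1 <;> subst hk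
    · have hs : Real.sin (Real.pi / 2 + k * (2 * Real.pi)) = 1 := by
        rw [Real.sin_add_int_mul_two_pi, Real.sin_pi_div_two]
      have hc : Real.cos (Real.pi / 2 + k * (2 * Real.pi)) = 0 := by
        rw [Real.cos_add_int_mul_two_pi, Real.cos_pi_div_two]
      exact ⟨by rw [hs]; ring, by rw [hc]; ring, by rw [Real.sin_two_mul, hs, hc]; ring⟩
    · have hs : Real.sin (-(Real.pi / 2) + k * (2 * Real.pi)) = -1 := by
        rw [Real.sin_add_int_mul_two_pi, Real.sin_neg, Real.sin_pi_div_two]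
      have hc : Real.cos (-(Real.pi / 2) + k * (2 * Real.pi)) = 0 := by
        rw [Real.cos_add_int_mul_two_pi, Real.cos_neg, Real.cos_pi_div_two]
      exact ⟨by rw [hs]; ring, by rw [hc]; ring, by rw [Real.sin_two_mul, hs, hc]; ring⟩
    · have hz : (k : ℝ) * (2 * Real.pi) = 0 + k * (2 * Real.pi) := by ring
      have hs : Real.sin ((k : ℝ) * (2 * Real.pi)) = 0 := by
        rw [hz, Real.sin_add_int_mul_two_pi, Real.sin_zero]
      have hc : Real.cos ((k : ℝ) * (2 * Real.pi)) = 1 := by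
        rw [hz, Real.cos_add_int_mul_two_pi, Real.cos_zero]
      exact ⟨by rw [hs]; ring, by rw [hc]; ring, by rw [Real.sin_two_mul, hs, hc]; ring⟩
    · have hs : Real.sin (Real.pi + k * (2 * Real.pi)) = 0 := by
        rw [Real.sin_add_int_mul_two_pi, Real.sin_pi]
      have hc : Real.cos (Real.pi + k * (2 * Real.pi)) = -1 := by
        rw [Real.cos_add_int_mul_two_pi, Real.cos_pi]
      exact ⟨by rw [hs]; ring, by rw [hc]; ring, by rw [Real.sin_two_mul, hs, hc]; ring⟩
end

section
/- For the time-dependent n = 2 surface x = t cos φ + sin φ − h sin φ, y = t sin φ + cos φ + h cos φ, z = h sin 2φ − (t/2) cos 2φ, the quantities A = 2xy, B = x² − y², C = x² + y² satisfy the two polynomial identities (t² + h² − 1)² = (h² + t² + 1)C + 2hB − 2tA and (2z + th)(h² + t² − 1) = htC − tB − 2hA. -/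
/-- The two polynomial relations in h satisfied along the time-dependent n = 2 surface. -/
theorem stmt_6 (t h φ : ℝ) :
    let x := t * Real.cos φ + Real.sin φ - h * Real.sin φ
    let y := t * Real.sin φ + Real.cos φ + h * Real.cos φ
    let z := h * Real.sin (2 * φ) - (t / 2) * Real.cos (2 * φ)
    let A := 2 * x * y
    let B := x ^ 2 - y ^ 2
    let C := x ^ 2 + y ^ 2
    (t ^ 2 + h ^ 2 - 1) ^ 2 = (h ^ 2 + t ^ 2 + 1) * C + 2 * h * B - 2 * t * A ∧
    (2 * z + t * h) * (h ^ 2 + t ^ 2 - 1) = h * t * C - t * B - 2 * h * A := by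
  have hs := Real.sin_sq_add_cos_sq φ
  have h2s : Real.sin (2 * φ) = 2 * Real.sin φ * Real.cos φ := Real.sin_two_mul φ
  have h2c : Real.cos (2 * φ) = Real.cos φ ^ 2 - Real.sin φ ^ 2 := Real.cos_two_mul' φ
  refine ⟨?_, ?_⟩
  · linear_combination (2*h^2 - h^4 - 2*t^2*h^2 + 2*t^2 - t^4 - 1) * hs
  · rw [h2s, h2c]
    linear_combination (t*h - t*h^3 - t^3*h) * hs
end

section
/- Let w(S) = (pS + t)·((t² + 4pqt²)S² + 4p(p + tS)(1 − S²) + 4p²q²t²) / ((S − qt)(2p + St)). Then for t > 0, p > 0, q ≥ 0 with qt < 1, and S ∈ [qt, 1] with S > qt, the function w is strictly monotone in S; equivalently, the expression −(S − qt)²(2p + St)²·w′(S), which equals q̃S²t⁴ + 8p⁴(2S³ + q̃(1+q̃²) − 3q̃S²) + pSt³(3S³ + 4q̃ + S(2+4q̃²) − 6q̃S²) + 2p²t²(4S⁵ + 4S(1+3q̃²) + S³(6+4q̃²) + 2q̃(1−q̃²) − 13q̃S² − 8q̃S⁴) + 4p³t(2 + 2q̃² + 7S⁴ + S²(1+7q̃²)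 − 14q̃S³) with q̃ = qt, is strictly positive for S ∈ [0,1]. -/
lemma grpA (qt S : ℝ) (hq0 : 0 ≤ qt) (hS0 : 0 ≤ S) :
    0 ≤ 2 * S ^ 3 + qt * (1 + qt ^ 2) - 3 * qt * S ^ 2 := by
  nlinarith [sq_nonneg (S - qt), mul_nonneg hS0 (sq_nonneg (S-qt)), mul_nonneg hq0 (sq_nonneg (S-qt)), sq_nonneg S, mul_nonneg hq0 hS0]

lemma grpB (qt S : ℝ) (hq0 : 0 ≤ qt) (hS0 : 0 ≤ S) :
    0 ≤ 3 * S ^ 3 + 4 * qt + S * (2 + 4 * qt ^ 2) - 6 * qt * S ^ 2 := by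
  nlinarith [mul_nonneg hS0 (sq_nonneg (S - qt)), mul_nonneg hq0 (sq_nonneg S), mul_nonneg hq0 hS0, mul_nonneg (mul_nonneg hq0 hq0) hS0]

lemma grpC (qt S : ℝ) :
    0 < 2 + 2 * qt ^ 2 + 7 * S ^ 4 + S ^ 2 * (1 + 7 * qt ^ 2) - 14 * qt * S ^ 3 := by
  nlinarith [mul_nonneg (sq_nonneg S) (sq_nonneg (S - qt)), sq_nonneg S, sq_nonneg qt]

lemma grpD (qt S : ℝ) (hq0 : 0 ≤ qt) (hq1 : qt ≤ 1) (hS0 : 0 ≤ S) (hS1 : S ≤ 1) :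
    0 ≤ 4 * S ^ 5 + 4 * S * (1 + 3 * qt ^ 2) + S ^ 3 * (6 + 4 * qt ^ 2) + 2 * qt * (1 - qt ^ 2) - 13 * qt * S ^ 2 - 8 * qt * S ^ 4 := by
  nlinarith [mul_nonneg (mul_nonneg hS0 hS0) (sq_nonneg (S - qt)), mul_nonneg (mul_nonneg hS0 (mul_nonneg hS0 hS0)) (sq_nonneg (S - qt)), mul_nonneg hS0 (sq_nonneg (S - qt)), mul_nonneg hq0 (sq_nonneg (1 - qt)), mul_nonneg hq0 (sq_nonneg (S - 1)), mul_nonneg hS0 hq0, sq_nonneg (S-qt), mul_nonneg (mul_nonneg hq0 hS0) (sub_nonneg.2 hS1), mul_nonneg (mul_nonneg hq0 hq0) hS0]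

/-- Positivity of the polynomial `−(S−qt)²(2p+St)²·w′(S)` (with qt = qt) for
t > 0, p > 0, 0 ≤ qt < 1 and S ∈ [0,1]. -/
theorem stmt_7 (p t qt S : ℝ) (ht : 0 < t) (hp : 0 < p)
    (hq0 : 0 ≤ qt) (hq1 : qt < 1) (hS0 : 0 ≤ S) (hS1 : S ≤ 1) :
    0 < qt * S ^ 2 * t ^ 4
      + 8 * p ^ 4 * (2 * S ^ 3 + qt * (1 + qt ^ 2) - 3 * qt * S ^ 2)
      + p * S * t ^ 3 * (3 * S ^ 3 + 4 * qt + S * (2 + 4 * qt ^ 2) - 6 * qt * S ^ 2)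
      + 2 * p ^ 2 * t ^ 2 * (4 * S ^ 5 + 4 * S * (1 + 3 * qt ^ 2)
          + S ^ 3 * (6 + 4 * qt ^ 2) + 2 * qt * (1 - qt ^ 2)
          - 13 * qt * S ^ 2 - 8 * qt * S ^ 4)
      + 4 * p ^ 3 * t * (2 + 2 * qt ^ 2 + 7 * S ^ 4
          + S ^ 2 * (1 + 7 * qt ^ 2) - 14 * qt * S ^ 3) := by
  have hA := grpA qt S hq0 hS0
  have hB := grpB qt S hq0 hS0
  have hC := grpC qt S
  have hD := grpD qt S hq0 hq1.le hS0 hS1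
  have h1 : 0 ≤ qt * S ^ 2 * t ^ 4 :=
    mul_nonneg (mul_nonneg hq0 (sq_nonneg S)) (by positivity)
  have h2 : 0 ≤ 8 * p ^ 4 * (2 * S ^ 3 + qt * (1 + qt ^ 2) - 3 * qt * S ^ 2) :=
    mul_nonneg (by positivity) hA
  have h3 : 0 ≤ p * S * t ^ 3 * (3 * S ^ 3 + 4 * qt + S * (2 + 4 * qt ^ 2) - 6 * qt * S ^ 2) :=
    mul_nonneg (by positivity) hB
  have h4 : 0 ≤ 2 * p ^ 2 * t ^ 2 * (4 * S ^ 5 + 4 * S * (1 + 3 * qt ^ 2)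
      + S ^ 3 * (6 + 4 * qt ^ 2) + 2 * qt * (1 - qt ^ 2)
      - 13 * qt * S ^ 2 - 8 * qt * S ^ 4) := mul_nonneg (by positivity) hD
  have h5 : 0 < 4 * p ^ 3 * t * (2 + 2 * qt ^ 2 + 7 * S ^ 4
      + S ^ 2 * (1 + 7 * qt ^ 2) - 14 * qt * S ^ 3) := mul_pos (by positivity) hC
  linarith
end

section
/- The polynomial P(s) = t⁶ + 12t⁴ + 4t² − 8st³(4 + t²) + 2s²t²(2 + 7t²) + 8s³t(1 + t²) − s⁴(4 + 3t² + 4t⁴), viewed as a polynomial in s for fixed real t ≠ 0, has exactly two real roots, one positive and one negative. -/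
private def Pf (t s : ℝ) : ℝ :=
  t ^ 6 + 12 * t ^ 4 + 4 * t ^ 2 - 8 * s * t ^ 3 * (4 + t ^ 2)
    + 2 * s ^ 2 * t ^ 2 * (2 + 7 * t ^ 2) + 8 * s ^ 3 * t * (1 + t ^ 2)
    - s ^ 4 * (4 + 3 * t ^ 2 + 4 * t ^ 4)

private def Qf (t s : ℝ) : ℝ :=
  -4*(4+3*t^2+4*t^4)*s^3 + 24*t*(1+t^2)*s^2 + 4*t^2*(2+7*t^2)*s - 8*t^3*(4+t^2)

private def qf (t s : ℝ) : ℝ :=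
  -12*(4+3*t^2+4*t^4)*s^2 + 48*t*(1+t^2)*s + 4*t^2*(2+7*t^2)

private lemma hasDerivPf (t y : ℝ) : HasDerivAt (Pf t) (Qf t y) y := by
  have h1 : HasDerivAt (fun s:ℝ => s) 1 y := hasDerivAt_id y
  have h2 : HasDerivAt (fun s:ℝ => s^2) (2*y) y := by simpa using hasDerivAt_pow 2 y
  have h3 : HasDerivAt (fun s:ℝ => s^3) (3*y^2) y := by simpa using hasDerivAt_pow 3 y
  have h4 : HasDerivAt (fun s:ℝ => s^4) (4*y^3) y := by simpa using hasDerivAt_pow 4 y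
  have h := ((((h1.const_mul (-(8*t^3*(4+t^2)))).add
      (h2.const_mul (2*t^2*(2+7*t^2)))).add
      (h3.const_mul (8*t*(1+t^2)))).add
      (h4.const_mul (-(4+3*t^2+4*t^4)))).const_add (t^6+12*t^4+4*t^2)
  have heq : (Pf t) = (fun s : ℝ => t^6+12*t^4+4*t^2 +
      ((((-(8*t^3*(4+t^2)))*s + (2*t^2*(2+7*t^2))*s^2) + (8*t*(1+t^2))*s^3)
        + (-(4+3*t^2+4*t^4))*s^4)) := by
    funext s; simp only [Pf]; ring
  rw [heq]
  convert h using 1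
  all_goals (try simp only [Qf, Pi.add_apply]); all_goals (try ring); all_goals rfl

private lemma hasDerivQf (t y : ℝ) : HasDerivAt (Qf t) (qf t y) y := by
  have h1 : HasDerivAt (fun s:ℝ => s) 1 y := hasDerivAt_id y
  have h2 : HasDerivAt (fun s:ℝ => s^2) (2*y) y := by simpa using hasDerivAt_pow 2 y
  have h3 : HasDerivAt (fun s:ℝ => s^3) (3*y^2) y := by simpa using hasDerivAt_pow 3 y
  have h := (((h3.const_mul (-4*(4+3*t^2+4*t^4))).add
      (h2.const_mul (24*t*(1+t^2)))).add
      (h1.const_mul (4*t^2*(2+7*t^2)))).sub_const (8*t^3*(4+t^2))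
  have heq : (Qf t) = (fun s : ℝ =>
      (((-4*(4+3*t^2+4*t^4))*s^3 + (24*t*(1+t^2))*s^2) + (4*t^2*(2+7*t^2))*s)
        - 8*t^3*(4+t^2)) := by
    funext s; simp only [Qf]
  rw [heq]
  convert h using 1
  all_goals (try simp only [qf, Pi.add_apply]); all_goals (try ring); all_goals rfl

private lemma contPf (t : ℝ) : Continuous (Pf t) :=
  continuous_iff_continuousAt.mpr fun y => (hasDerivPf t y).continuousAt

private lemma contQf (t : ℝ) : Continuous (Qf t) :=
  continuous_iff_continuousAt.mpr fun y => (hasDerivQf t y).continuousAt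

/-- Key certificate: for `t > 0`, `t ≠ 1`, every critical point of `Qf t` has
negative value. -/
private lemma crit (t s : ℝ) (ht : 0 < t) (ht1 : t ≠ 1) (h : qf t s = 0) :
    Qf t s < 0 := by
  simp only [qf] at h
  simp only [Qf]
  have hcpos : 0 < 4+3*t^2+4*t^4 := by positivity
  have ht2 : (0:ℝ) < (t^2-1)^2 := by
    have : t^2 - 1 ≠ 0 := fun h0 => ht1 (by nlinarith)
    positivity
  set x : ℝ := (20+58*t^2+41*t^4+28*t^6)*s - t*(46+39*t^2+50*t^4+12*t^6) with hxdef
  have hx : x < 0 := by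
    by_contra hge
    push_neg at hge
    have hid : (20+58*t^2+41*t^4+28*t^6)^2 *
        (-12*(4+3*t^2+4*t^4)*s^2 + 48*t*(1+t^2)*s + 4*t^2*(2+7*t^2))
        = -12*(4+3*t^2+4*t^4)*x^2
          - 24*t*(144+138*t^2+303*t^4+216*t^6+180*t^8+48*t^10)*x
          - t^2*(t^2-1)^2*(6912*t^12+38528*t^10+107680*t^8+166900*t^6+187520*t^4+117392*t^2+54208) := by
      rw [hxdef]; ring
    rw [h, mul_zero] at hid
    nlinarith [sq_nonneg x, mul_nonneg (le_of_lt ht) hge, pow_pos ht 2,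
      mul_pos (mul_pos (pow_pos ht 2) ht2)
        (show (0:ℝ) < 6912*t^12+38528*t^10+107680*t^8+166900*t^6+187520*t^4+117392*t^2+54208 by positivity),
      mul_nonneg (mul_nonneg (le_of_lt ht)
        (show (0:ℝ) ≤ 144+138*t^2+303*t^4+216*t^6+180*t^8+48*t^10 by positivity)) hge]
  have key : 3*(4+3*t^2+4*t^4) *
      (-4*(4+3*t^2+4*t^4)*s^3 + 24*t*(1+t^2)*s^2 + 4*t^2*(2+7*t^2)*s - 8*t^3*(4+t^2))
      = 8*t^2*x := by
    rw [hxdef]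
    linear_combination ((4+3*t^2+4*t^4)*s - 2*t*(1+t^2)) * h
  nlinarith [mul_pos (mul_pos (show (0:ℝ)<8 by norm_num) (pow_pos ht 2)) (neg_pos.mpr hx)]

private lemma QfNegBig (t : ℝ) (ht : 0 < t) : 0 < Qf t (-(1+t)) := by
  simp only [Qf]
  nlinarith [pow_pos ht 2, pow_pos ht 3, pow_pos ht 4, pow_pos ht 5, pow_pos ht 6,
    sq_nonneg (t-1), sq_nonneg (t^2-1)]

private lemma PfRBig (t : ℝ) (ht : 0 < t) : Pf t (2+t+t^2) < 0 := by
  simp only [Pf]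
  nlinarith [pow_pos ht 2, pow_pos ht 3, pow_pos ht 4, pow_pos ht 5, pow_pos ht 6,
    pow_pos ht 7, pow_pos ht 8, pow_pos ht 9, pow_pos ht 10, pow_pos ht 11, pow_pos ht 12]

private lemma PfnRBig (t : ℝ) (ht : 0 < t) : Pf t (-(2+t+t^2)) < 0 := by
  simp only [Pf]
  nlinarith [pow_pos ht 2, pow_pos ht 3, pow_pos ht 4, pow_pos ht 5, pow_pos ht 6,
    pow_pos ht 7, pow_pos ht 8, pow_pos ht 9, pow_pos ht 10, pow_pos ht 11, pow_pos ht 12]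

private lemma aux (t : ℝ) (ht : 0 < t) :
    ∃ s₁ s₂ : ℝ, s₁ < 0 ∧ 0 < s₂ ∧ {s : ℝ | Pf t s = 0} = {s₁, s₂} := by
  by_cases ht1 : t = 1
  · subst ht1
    refine ⟨-17/11, 1, by norm_num, one_pos, ?_⟩
    ext r
    simp only [Set.mem_setOf_eq, Set.mem_insert_iff, Set.mem_singleton_iff, Pf]
    constructor
    · intro hr
      have h2 : (1 - r)^3 * (11*r + 17) = 0 := by linear_combination hr
      rcases mul_eq_zero.mp h2 with h3 | h3
      · right
        have : (1:ℝ) - r = 0 := by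
          exact pow_eq_zero_iff (n := 3) (by norm_num) |>.mp h3
        linarith
      · left; linarith
    · rintro (rfl | rfl) <;> norm_num
  -- main case : t > 0, t ≠ 1
  have hcpos : 0 < 4+3*t^2+4*t^4 := by positivity
  set b : ℝ := 48*t*(1+t^2) with hbdef
  set e : ℝ := 4*t^2*(2+7*t^2) with hedef
  have hbpos : 0 < b := by rw [hbdef]; positivity
  have hepos : 0 < e := by rw [hedef]; positivity
  set D : ℝ := b^2 + 48*(4+3*t^2+4*t^4)*e with hDdef
  have hDpos : 0 < D := by positivity
  set sq : ℝ := Real.sqrt D with hsqdef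
  have hsq2 : sq^2 = D := Real.sq_sqrt hDpos.le
  have hsqb : b < sq := by
    nlinarith [Real.sqrt_nonneg D, hsq2, mul_pos hcpos hepos]
  set u₁ : ℝ := (b - sq)/(24*(4+3*t^2+4*t^4)) with hu1def
  set u₂ : ℝ := (b + sq)/(24*(4+3*t^2+4*t^4)) with hu2def
  have h24 : (0:ℝ) < 24*(4+3*t^2+4*t^4) := by positivity
  have hu12 : u₁ < u₂ := by
    rw [hu1def, hu2def, div_lt_div_iff₀ h24 h24]
    nlinarith [hsqb, hbpos]
  have hu1neg : u₁ < 0 := div_neg_of_neg_of_pos (by linarith) h24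
  -- factorization of the quadratic qf
  have hfact : ∀ s : ℝ, qf t s = -12*(4+3*t^2+4*t^4)*(s-u₁)*(s-u₂) := by
    intro s
    simp only [qf]
    rw [hu1def, hu2def]
    field_simp
    linear_combination (-12) * hsq2
  have hq1 : qf t u₁ = 0 := by rw [hfact]; ring
  have hq2 : qf t u₂ = 0 := by rw [hfact]; ring
  have hQu1 : Qf t u₁ < 0 := crit t u₁ ht ht1 hq1
  have hQu2 : Qf t u₂ < 0 := crit t u₂ ht ht1 hq2
  have hderivQ : ∀ y, deriv (Qf t) y = qf t y := fun y => (hasDerivQf t y).deriv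
  have hanti1 : StrictAntiOn (Qf t) (Set.Iic u₁) := by
    apply strictAntiOn_of_deriv_neg (convex_Iic _) (contQf t).continuousOn
    intro x hx
    rw [interior_Iic] at hx
    rw [hderivQ, hfact]
    have h1 : x - u₁ < 0 := sub_neg.mpr hx
    have h2 : x - u₂ < 0 := sub_neg.mpr (hx.trans hu12)
    nlinarith [mul_pos_of_neg_of_neg h1 h2]
  have hmono : MonotoneOn (Qf t) (Set.Icc u₁ u₂) := by
    apply monotoneOn_of_deriv_nonneg (convex_Icc _ _) (contQf t).continuousOn
    · exact fun x _ => ((hasDerivQf t x).differentiableAt).differentiableWithinAt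
    · intro x hx
      rw [interior_Icc] at hx
      rw [hderivQ, hfact]
      nlinarith [mul_neg_of_pos_of_neg (sub_pos.mpr hx.1) (sub_neg.mpr hx.2)]
  have hanti2 : AntitoneOn (Qf t) (Set.Ici u₂) := by
    apply antitoneOn_of_deriv_nonpos (convex_Ici _) (contQf t).continuousOn
    · exact fun x _ => ((hasDerivQf t x).differentiableAt).differentiableWithinAt
    · intro x hx
      rw [interior_Ici] at hx
      rw [hderivQ, hfact]
      nlinarith [mul_pos (sub_pos.mpr (hu12.trans hx)) (sub_pos.mpr hx)]
  have hQneg : ∀ s, u₁ ≤ s → Qf t s < 0 := by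
    intro s hs
    rcases le_total s u₂ with h | h
    · exact lt_of_le_of_lt
        (hmono (Set.mem_Icc.mpr ⟨hs, h⟩) (Set.mem_Icc.mpr ⟨hu12.le, le_refl _⟩) h) hQu2
    · exact lt_of_le_of_lt (hanti2 (Set.mem_Ici.mpr le_rfl) (Set.mem_Ici.mpr h) h) hQu2
  have hQpos1t : 0 < Qf t (-(1+t)) := QfNegBig t ht
  have hlt : -(1+t) < u₁ := by
    by_contra hcon
    push_neg at hcon
    exact absurd (hQneg _ hcon) (by linarith)
  obtain ⟨m, hmIoo, hQm⟩ :=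
    intermediate_value_Ioo' hlt.le (contQf t).continuousOn ⟨hQu1, hQpos1t⟩
  have hm1 : -(1+t) < m := hmIoo.1
  have hmu1 : m < u₁ := hmIoo.2
  have hmneg : m < 0 := hmu1.trans hu1neg
  have hQposlt : ∀ s, s < m → 0 < Qf t s := by
    intro s hs
    have := hanti1 (Set.mem_Iic.mpr (hs.trans hmu1).le) (Set.mem_Iic.mpr hmu1.le) hs
    rw [hQm] at this
    exact this
  have hQneggt : ∀ s, m < s → Qf t s < 0 := by
    intro s hs
    rcases le_or_gt u₁ s with h | h
    · exact hQneg s h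
    · have := hanti1 (Set.mem_Iic.mpr hmu1.le) (Set.mem_Iic.mpr h.le) hs
      rw [hQm] at this
      exact this
  have hderivP : ∀ y, deriv (Pf t) y = Qf t y := fun y => (hasDerivPf t y).deriv
  have hPmono : StrictMonoOn (Pf t) (Set.Iic m) := by
    apply strictMonoOn_of_deriv_pos (convex_Iic _) (contPf t).continuousOn
    intro x hx
    rw [interior_Iic] at hx
    rw [hderivP]
    exact hQposlt x hx
  have hPanti : StrictAntiOn (Pf t) (Set.Ici m) := by
    apply strictAntiOn_of_deriv_neg (convex_Ici _) (contPf t).continuousOn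
    intro x hx
    rw [interior_Ici] at hx
    rw [hderivP]
    exact hQneggt x hx
  have hP0 : 0 < Pf t 0 := by
    have h0 : Pf t 0 = t^6+12*t^4+4*t^2 := by simp only [Pf]; ring
    rw [h0]; positivity
  have hPm : 0 < Pf t m := by
    have := hPanti (Set.mem_Ici.mpr le_rfl) (Set.mem_Ici.mpr hmneg.le) hmneg
    linarith
  have hPR : Pf t (2+t+t^2) < 0 := PfRBig t ht
  have hPnR : Pf t (-(2+t+t^2)) < 0 := PfnRBig t ht
  have h2R : -(2+t+t^2) < m := by nlinarith [hm1, sq_nonneg t]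
  obtain ⟨s₁, hs1Ioo, hPs1⟩ :=
    intermediate_value_Ioo h2R.le (contPf t).continuousOn ⟨hPnR, hPm⟩
  have hs1m : s₁ < m := hs1Ioo.2
  have hs1neg : s₁ < 0 := hs1m.trans hmneg
  obtain ⟨s₂, hs2Ioo, hPs2⟩ :=
    intermediate_value_Ioo' (show (0:ℝ) ≤ 2+t+t^2 by positivity)
      (contPf t).continuousOn ⟨hPR, hP0⟩
  have hs2pos : 0 < s₂ := hs2Ioo.1
  refine ⟨s₁, s₂, hs1neg, hs2pos, ?_⟩
  ext r
  simp only [Set.mem_setOf_eq, Set.mem_insert_iff, Set.mem_singleton_iff]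
  constructor
  · intro hr
    rcases le_total r m with h | h
    · left
      exact hPmono.injOn (Set.mem_Iic.mpr h) (Set.mem_Iic.mpr hs1m.le) (by rw [hr, hPs1])
    · right
      exact hPanti.injOn (Set.mem_Ici.mpr h)
        (Set.mem_Ici.mpr (hmneg.trans hs2pos).le) (by rw [hr, hPs2])
  · rintro (rfl | rfl)
    exacts [hPs1, hPs2]

/-- For fixed t ≠ 0 the triple-point quartic in s has exactly two real roots,
one positive and one negative. -/
theorem stmt_9 (t : ℝ) (ht : t ≠ 0) :
    let P : ℝ → ℝ := fun s =>
      t ^ 6 + 12 * t ^ 4 + 4 * t ^ 2 - 8 * s * t ^ 3 * (4 + t ^ 2)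
        + 2 * s ^ 2 * t ^ 2 * (2 + 7 * t ^ 2) + 8 * s ^ 3 * t * (1 + t ^ 2)
        - s ^ 4 * (4 + 3 * t ^ 2 + 4 * t ^ 4)
    ∃ s₁ s₂ : ℝ, s₁ < 0 ∧ 0 < s₂ ∧ {s : ℝ | P s = 0} = {s₁, s₂} := by
  intro P
  rcases ht.lt_or_gt with htn | htp
  · obtain ⟨s₁, s₂, h1, h2, hset⟩ := aux (-t) (by linarith)
    refine ⟨-s₂, -s₁, by linarith, by linarith, ?_⟩
    ext r
    have hPr : P r = Pf (-t) (-r) := by simp only [P, Pf]; ring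
    have hmem := Set.ext_iff.mp hset (-r)
    simp only [Set.mem_setOf_eq, Set.mem_insert_iff, Set.mem_singleton_iff] at hmem ⊢
    rw [show (P r = 0) ↔ (Pf (-t) (-r) = 0) by rw [hPr], hmem]
    constructor
    · rintro (h | h)
      · right; linarith
      · left; linarith
    · rintro (h | h)
      · right; linarith
      · left; linarith
  · obtain ⟨s₁, s₂, h1, h2, hset⟩ := aux t htp
    exact ⟨s₁, s₂, h1, h2, hset⟩
end

section
/- The Jacobian determinant of the map (x,y,z) ↦ (x·(ξ + η(x²+y²))^{−κ}, y·(ξ + η(x²+y²))^{−κ}, z/(ξ + η(x²+y²))) equals (ξ² + ξη|w|²(2−2κ) + η²|w|⁴(1−2κ)) / (ξ + η|w|²)^{3+2κ}, where |w|² = x² + y²; in particular, if ξ > 0, η ≥ 0 and 0 < κ < 1/2 then this Jacobian is strictly positive everywhere, so the map is a local diffeomorphism. -/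
open ContinuousLinearMap

noncomputable def e3 : (ℝ × ℝ × ℝ) ≃ₗ[ℝ] (Fin 3 → ℝ) where
  toFun v := ![v.1, v.2.1, v.2.2]
  invFun f := (f 0, f 1, f 2)
  map_add' a b := by funext i; fin_cases i <;> simp
  map_smul' c a := by funext i; fin_cases i <;> simp
  left_inv v := rfl
  right_inv f := by funext i; fin_cases i <;> simp

theorem e3_apply (v : ℝ × ℝ × ℝ) : e3 v = ![v.1, v.2.1, v.2.2] := rfl

theorem e3_symm_apply (f : Fin 3 → ℝ) : e3.symm f = (f 0, f 1, f 2) := rfl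

noncomputable def b3 : Module.Basis (Fin 3) ℝ (ℝ × ℝ × ℝ) := Module.Basis.ofEquivFun e3



/-- The Jacobian determinant of the damping map (x,y,z) ↦
(x·(ξ+η(x²+y²))^(−κ), y·(ξ+η(x²+y²))^(−κ), z/(ξ+η(x²+y²))) equals
(ξ² + ξη|w|²(2−2κ) + η²|w|⁴(1−2κ))/(ξ+η|w|²)^(3+2κ), |w|² = x²+y²,
and this is strictly positive for ξ > 0, η ≥ 0, 0 < κ < 1/2. -/
theorem stmt_13 (ξ η κ : ℝ) (hξ : 0 < ξ) (hη : 0 ≤ η) (hκ0 : 0 < κ) (hκ : κ < 1 / 2) :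
    let Φ : ℝ × ℝ × ℝ → ℝ × ℝ × ℝ := fun v =>
      (v.1 * (ξ + η * (v.1 ^ 2 + v.2.1 ^ 2)) ^ (-κ),
       v.2.1 * (ξ + η * (v.1 ^ 2 + v.2.1 ^ 2)) ^ (-κ),
       v.2.2 / (ξ + η * (v.1 ^ 2 + v.2.1 ^ 2)))
    ∀ v : ℝ × ℝ × ℝ,
      let w2 := v.1 ^ 2 + v.2.1 ^ 2
      let J := LinearMap.det ((fderiv ℝ Φ v) : (ℝ × ℝ × ℝ) →ₗ[ℝ] (ℝ × ℝ × ℝ))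
      J = (ξ ^ 2 + ξ * η * w2 * (2 - 2 * κ) + η ^ 2 * w2 ^ 2 * (1 - 2 * κ)) /
            (ξ + η * w2) ^ (3 + 2 * κ) ∧ 0 < J := by
  intro Φ v w2 J
  have hr : 0 ≤ v.1 ^ 2 + v.2.1 ^ 2 := by positivity
  have hf : 0 < ξ + η * (v.1 ^ 2 + v.2.1 ^ 2) := by positivity
  set P1 : (ℝ × ℝ × ℝ) →L[ℝ] ℝ := fst ℝ ℝ (ℝ × ℝ) with hP1
  set P2 : (ℝ × ℝ × ℝ) →L[ℝ] ℝ := (fst ℝ ℝ ℝ).comp (snd ℝ ℝ (ℝ × ℝ)) with hP2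
  set P3 : (ℝ × ℝ × ℝ) →L[ℝ] ℝ := (snd ℝ ℝ ℝ).comp (snd ℝ ℝ (ℝ × ℝ)) with hP3
  have hx : HasFDerivAt (fun v : ℝ × ℝ × ℝ => v.1) P1 v := hasFDerivAt_fst
  have hy : HasFDerivAt (fun v : ℝ × ℝ × ℝ => v.2.1) P2 v := hasFDerivAt_snd.fst
  have hz : HasFDerivAt (fun v : ℝ × ℝ × ℝ => v.2.2) P3 v := hasFDerivAt_snd.snd
  have hF : HasFDerivAt (fun v : ℝ × ℝ × ℝ => ξ + η * (v.1 ^ 2 + v.2.1 ^ 2))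
      (η • ((v.1 • P1 + v.1 • P1) + (v.2.1 • P2 + v.2.1 • P2))) v := by
    have := (((hx.mul hx).add (hy.mul hy)).const_mul η).const_add ξ
    simpa only [Pi.mul_def, Pi.add_def, Pi.pow_apply, ← pow_two] using this
  have hh := hF.rpow_const (p := -κ) (Or.inl hf.ne')
  have hinv := (hasDerivAt_inv hf.ne').comp_hasFDerivAt v hF
  have h3 : HasFDerivAt (fun v : ℝ × ℝ × ℝ => v.2.2 / (ξ + η * (v.1 ^ 2 + v.2.1 ^ 2)))
      (v.2.2 • ((-((ξ + η * (v.1 ^ 2 + v.2.1 ^ 2)) ^ 2)⁻¹) •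
          (η • ((v.1 • P1 + v.1 • P1) + (v.2.1 • P2 + v.2.1 • P2)))) +
        (ξ + η * (v.1 ^ 2 + v.2.1 ^ 2))⁻¹ • P3) v := by
    simpa only [div_eq_mul_inv, Pi.mul_def, Function.comp_def] using hz.mul hinv
  have hL := HasFDerivAt.prodMk (hx.mul hh) (HasFDerivAt.prodMk (hy.mul hh) h3)
  have hd : fderiv ℝ Φ v = _ := hL.fderiv
  have hJ : J = (ξ ^ 2 + ξ * η * (v.1 ^ 2 + v.2.1 ^ 2) * (2 - 2 * κ) +
      η ^ 2 * (v.1 ^ 2 + v.2.1 ^ 2) ^ 2 * (1 - 2 * κ)) /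
      (ξ + η * (v.1 ^ 2 + v.2.1 ^ 2)) ^ (3 + 2 * κ) := by
    show LinearMap.det _ = _
    rw [hd, ← LinearMap.det_toMatrix b3, Matrix.det_fin_three]
    simp only [LinearMap.toMatrix_apply, b3, Module.Basis.ofEquivFun_repr_apply, Module.Basis.coe_ofEquivFun, e3_apply, e3_symm_apply]
    simp only [hP1, hP2, hP3]
    simp [Function.update]
    rw [eq_div_iff (by positivity)]
    have key : ∀ s t : ℝ, (ξ + η * (v.1 ^ 2 + v.2.1 ^ 2)) ^ s * (ξ + η * (v.1 ^ 2 + v.2.1 ^ 2)) ^ t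
        = (ξ + η * (v.1 ^ 2 + v.2.1 ^ 2)) ^ (s + t) := fun s t => (Real.rpow_add hf s t).symm
    have e1 : (ξ + η * (v.1 ^ 2 + v.2.1 ^ 2)) ^ (-κ) * (ξ + η * (v.1 ^ 2 + v.2.1 ^ 2)) ^ (-κ) *
        (ξ + η * (v.1 ^ 2 + v.2.1 ^ 2))⁻¹ * (ξ + η * (v.1 ^ 2 + v.2.1 ^ 2)) ^ (3 + 2 * κ)
        = (ξ + η * (v.1 ^ 2 + v.2.1 ^ 2)) * (ξ + η * (v.1 ^ 2 + v.2.1 ^ 2)) := by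
      rw [← Real.rpow_neg_one, key, key, key,
        show -κ + -κ + -1 + (3 + 2 * κ) = (1 : ℝ) + 1 from by ring, Real.rpow_add hf,
        Real.rpow_one]
    have e2 : (ξ + η * (v.1 ^ 2 + v.2.1 ^ 2)) ^ (-κ) * (ξ + η * (v.1 ^ 2 + v.2.1 ^ 2)) ^ (-κ - 1) *
        (ξ + η * (v.1 ^ 2 + v.2.1 ^ 2))⁻¹ * (ξ + η * (v.1 ^ 2 + v.2.1 ^ 2)) ^ (3 + 2 * κ)
        = ξ + η * (v.1 ^ 2 + v.2.1 ^ 2) := by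
      rw [← Real.rpow_neg_one, key, key, key,
        show -κ + (-κ - 1) + -1 + (3 + 2 * κ) = (1 : ℝ) from by ring, Real.rpow_one]
    linear_combination e1 - 2 * κ * η * (v.1 ^ 2 + v.2.1 ^ 2) * e2
  refine ⟨hJ, ?_⟩
  rw [hJ]
  apply div_pos
  · have h1 : 0 ≤ ξ * η * (v.1 ^ 2 + v.2.1 ^ 2) * (2 - 2 * κ) := by
      apply mul_nonneg (mul_nonneg (mul_nonneg hξ.le hη) hr); linarith
    have h2 : 0 ≤ η ^ 2 * (v.1 ^ 2 + v.2.1 ^ 2) ^ 2 * (1 - 2 * κ) := by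
      apply mul_nonneg (mul_nonneg (sq_nonneg η) (sq_nonneg _)); linarith
    have h0 := pow_pos hξ 2
    linarith
  · exact Real.rpow_pos_of_pos hf _
end

section
/- For fixed reals t ≠ 0, ω > 0, λ ∈ [0,1] and natural n ≥ 2, the function C ↦ (t²(λC^{n/2} + (1−λ))² + λ²ω²(1−C))·C^{−n} is strictly decreasing on (0,1]; consequently x″² + y″² = η^{2κ}·C·(t²(λC^{n/2}+(1−λ))² + λ²ω²(1−C))^{−1/n} is a strictly increasing function of C = cos²θ on (0,1]. -/
/-- The function C ↦ (t²(λC^(n/2)+(1−λ))² + λ²ω²(1−C))·C^(−n) is strictly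
decreasing on (0,1]; consequently x″² + y″² = η^(2κ)·C·(…)^(−1/n) is strictly
increasing in C = cos²θ on (0,1]. Here κ = (n−1)/(2n). -/
theorem stmt_15 (t ω lam η : ℝ) (n : ℕ) (hn : 2 ≤ n) (ht : t ≠ 0) (hω : 0 < ω)
    (hlam0 : 0 ≤ lam) (hlam1 : lam ≤ 1) (hη : 0 < η) :
    let κ : ℝ := ((n : ℝ) - 1) / (2 * n)
    let f : ℝ → ℝ := fun C =>
      (t ^ 2 * (lam * C ^ ((n : ℝ) / 2) + (1 - lam)) ^ 2
        + lam ^ 2 * ω ^ 2 * (1 - C)) * C ^ (-(n : ℝ))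
    let g : ℝ → ℝ := fun C =>
      η ^ (2 * κ) * C *
        (t ^ 2 * (lam * C ^ ((n : ℝ) / 2) + (1 - lam)) ^ 2
          + lam ^ 2 * ω ^ 2 * (1 - C)) ^ (-(1 : ℝ) / n)
    StrictAntiOn f (Set.Ioc 0 1) ∧ StrictMonoOn g (Set.Ioc 0 1) := by
  intro κ f g
  have hn2 : (2 : ℝ) ≤ (n : ℝ) := by exact_mod_cast hn
  have hn0 : (n : ℝ) ≠ 0 := by positivity
  have ht2 : 0 < t ^ 2 := by positivity
  -- positivity of B = λ u + (1-λ)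
  have hB : ∀ x : ℝ, 0 < x → 0 < lam * x ^ ((n : ℝ) / 2) + (1 - lam) := by
    intro x hx
    have hu : 0 < x ^ ((n : ℝ) / 2) := Real.rpow_pos_of_pos hx _
    rcases hlam0.eq_or_lt with h | h
    · rw [← h]; norm_num
    · nlinarith [mul_pos h hu]
  -- positivity of A
  have hApos : ∀ x ∈ Set.Ioc (0 : ℝ) 1,
      0 < t ^ 2 * (lam * x ^ ((n : ℝ) / 2) + (1 - lam)) ^ 2
        + lam ^ 2 * ω ^ 2 * (1 - x) := by
    intro x hx
    have h1 := hB x hx.1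
    have h2 : 0 ≤ lam ^ 2 * ω ^ 2 * (1 - x) := by
      have : (0:ℝ) ≤ 1 - x := by linarith [hx.2]
      positivity
    nlinarith [mul_pos ht2 (pow_pos h1 2)]
  -- continuity of f on (0,1]
  have c1 : ContinuousOn (fun C : ℝ => C ^ ((n : ℝ) / 2)) (Set.Ioc 0 1) :=
    continuousOn_id.rpow_const fun x hx => Or.inl hx.1.ne'
  have c2 : ContinuousOn (fun C : ℝ => C ^ (-(n : ℝ))) (Set.Ioc 0 1) :=
    continuousOn_id.rpow_const fun x hx => Or.inl hx.1.ne'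
  have hcont : ContinuousOn f (Set.Ioc 0 1) :=
    ((continuousOn_const.mul
        (((continuousOn_const.mul c1).add continuousOn_const).pow 2)).add
      (continuousOn_const.mul (continuousOn_const.sub continuousOn_id))).mul c2
  -- derivative negative on interior
  have key : ∀ x ∈ interior (Set.Ioc (0 : ℝ) 1), deriv f x < 0 := by
    intro x hx
    rw [interior_Ioc] at hx
    obtain ⟨hx0, hx1⟩ := hx
    have hupos : 0 < x ^ ((n : ℝ) / 2) := Real.rpow_pos_of_pos hx0 _
    have hBpos := hB x hx0
    have hdu : HasDerivAt (fun C : ℝ => C ^ ((n : ℝ) / 2))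
        ((n : ℝ) / 2 * x ^ ((n : ℝ) / 2 - 1)) x :=
      Real.hasDerivAt_rpow_const (Or.inl hx0.ne')
    have hdB : HasDerivAt (fun C : ℝ => lam * C ^ ((n : ℝ) / 2) + (1 - lam))
        (lam * ((n : ℝ) / 2 * x ^ ((n : ℝ) / 2 - 1))) x :=
      (hdu.const_mul lam).add_const _
    have hdA := ((hdB.pow 2).const_mul (t ^ 2)).add
      (((hasDerivAt_id x).const_sub 1).const_mul (lam ^ 2 * ω ^ 2))
    have hdp : HasDerivAt (fun C : ℝ => C ^ (-(n : ℝ)))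
        (-(n : ℝ) * x ^ (-(n : ℝ) - 1)) x :=
      Real.hasDerivAt_rpow_const (Or.inl hx0.ne')
    have e1 : x ^ ((n : ℝ) / 2 - 1) = x ^ ((n : ℝ) / 2) / x := by
      rw [Real.rpow_sub hx0, Real.rpow_one]
    have e2 : x ^ (-(n : ℝ) - 1) = x ^ (-(n : ℝ)) / x := by
      rw [Real.rpow_sub hx0, Real.rpow_one]
    have hEneg :
        (n : ℝ) * t ^ 2 * lam * x ^ ((n : ℝ) / 2)
            * (lam * x ^ ((n : ℝ) / 2) + (1 - lam))
          - lam ^ 2 * ω ^ 2 * x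
          - (n : ℝ) * (t ^ 2 * (lam * x ^ ((n : ℝ) / 2) + (1 - lam)) ^ 2
            + lam ^ 2 * ω ^ 2 * (1 - x)) < 0 := by
      have keyeq :
          (n : ℝ) * t ^ 2 * lam * x ^ ((n : ℝ) / 2)
              * (lam * x ^ ((n : ℝ) / 2) + (1 - lam))
            - lam ^ 2 * ω ^ 2 * x
            - (n : ℝ) * (t ^ 2 * (lam * x ^ ((n : ℝ) / 2) + (1 - lam)) ^ 2
              + lam ^ 2 * ω ^ 2 * (1 - x))
          = -((n : ℝ) * t ^ 2 * (lam * x ^ ((n : ℝ) / 2) + (1 - lam)) * (1 - lam))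
            + lam ^ 2 * ω ^ 2 * (((n : ℝ) - 1) * x - (n : ℝ)) := by ring
      rw [keyeq]
      rcases hlam0.eq_or_lt with h | h
      · have h0 : lam = 0 := h.symm
        subst h0
        nlinarith
      · have t1 : 0 ≤ (n : ℝ) * t ^ 2 * (lam * x ^ ((n : ℝ) / 2) + (1 - lam)) * (1 - lam) := by
          have h1 : (0:ℝ) ≤ 1 - lam := by linarith
          have h2 : (0:ℝ) ≤ (n : ℝ) * t ^ 2 := by positivity
          exact mul_nonneg (mul_nonneg h2 hBpos.le) h1
        have t2 : lam ^ 2 * ω ^ 2 * (((n : ℝ) - 1) * x - (n : ℝ)) < 0 := by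
          apply mul_neg_of_pos_of_neg (by positivity)
          nlinarith
        linarith
    have hdf' : HasDerivAt f ((x ^ (-(n : ℝ)) / x) *
        ((n : ℝ) * t ^ 2 * lam * x ^ ((n : ℝ) / 2)
            * (lam * x ^ ((n : ℝ) / 2) + (1 - lam))
          - lam ^ 2 * ω ^ 2 * x
          - (n : ℝ) * (t ^ 2 * (lam * x ^ ((n : ℝ) / 2) + (1 - lam)) ^ 2
            + lam ^ 2 * ω ^ 2 * (1 - x)))) x := by
      refine (hdA.mul hdp).congr_deriv ?_
      simp only [Pi.add_apply, Pi.pow_apply, id]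
      rw [e1, e2]
      field_simp
      ring
    rw [hdf'.deriv]
    exact mul_neg_of_pos_of_neg (by positivity) hEneg
  have hf_anti : StrictAntiOn f (Set.Ioc 0 1) :=
    strictAntiOn_of_deriv_neg (convex_Ioc 0 1) hcont key
  refine ⟨hf_anti, ?_⟩
  -- positivity of f
  have hfpos : ∀ x ∈ Set.Ioc (0 : ℝ) 1, 0 < f x := fun x hx =>
    mul_pos (hApos x hx) (Real.rpow_pos_of_pos hx.1 _)
  -- g = η^(2κ) * f^(-1/n)
  have hgf : ∀ x ∈ Set.Ioc (0 : ℝ) 1,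
      g x = η ^ (2 * κ) * f x ^ ((-1 : ℝ) / n) := by
    intro x hx
    have hxp : (x ^ (-(n : ℝ))) ^ ((-1 : ℝ) / (n : ℝ)) = x := by
      rw [← Real.rpow_mul hx.1.le]
      rw [show (-(n : ℝ)) * ((-1 : ℝ) / (n : ℝ)) = 1 by field_simp]
      exact Real.rpow_one x
    have : f x ^ ((-1 : ℝ) / (n : ℝ))
        = (t ^ 2 * (lam * x ^ ((n : ℝ) / 2) + (1 - lam)) ^ 2
            + lam ^ 2 * ω ^ 2 * (1 - x)) ^ ((-1 : ℝ) / n) * x := by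
      show ((t ^ 2 * (lam * x ^ ((n : ℝ) / 2) + (1 - lam)) ^ 2
          + lam ^ 2 * ω ^ 2 * (1 - x)) * x ^ (-(n : ℝ))) ^ ((-1 : ℝ) / (n : ℝ)) = _
      rw [Real.mul_rpow (hApos x hx).le (Real.rpow_pos_of_pos hx.1 _).le, hxp]
    show η ^ (2 * κ) * x *
        (t ^ 2 * (lam * x ^ ((n : ℝ) / 2) + (1 - lam)) ^ 2
          + lam ^ 2 * ω ^ 2 * (1 - x)) ^ ((-1 : ℝ) / n) = _
    rw [this]; ring
  intro x hx y hy hxy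
  rw [hgf x hx, hgf y hy]
  have h1 : f y < f x := hf_anti hx hy hxy
  have hz : (-1 : ℝ) / (n : ℝ) < 0 := by
    apply div_neg_of_neg_of_pos (by norm_num)
    positivity
  have h2 : f x ^ ((-1 : ℝ) / (n : ℝ)) < f y ^ ((-1 : ℝ) / (n : ℝ)) :=
    Real.rpow_lt_rpow_of_neg (hfpos y hy) h1 hz
  exact mul_lt_mul_of_pos_left h2 (Real.rpow_pos_of_pos hη _)
end
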